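/- Let (P, ≤, *, 0, 1) be a pseudocomplemented poset such that for every subset B of P* := {x* : x ∈ P} there exists an element c ∈ P* which is the greatest lower bound of B in (P, ≤). Then the complete ortholattice of closed subsets of P is a complete Boolean algebra; concretely, for all closed subsets A, B, C of P: A ∩ (B ∪ C)^⊥⊥ = ((A ∩ B) ∪ (A ∩ C))^⊥⊥, A ∩ A^⊥ = {0}, and (A ∪ A^⊥)^⊥⊥ = P. -/
import Mathlib


/-- The orthogonal of a subset of a pseudocomplemented poset, where `x ⊥ y` iff `y ≤ x*`. -/
def pperp {P : Type*} (star : P → P) [LE P] (A : Set P) : Set P :=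
  {x | ∀ y ∈ A, y ≤ star x}

section Aux

variable {P : Type*} [PartialOrder P] [BoundedOrder P] {star : P → P}

lemma pperp_anti {S T : Set P} (h : S ⊆ T) : pperp star T ⊆ pperp star S :=
  fun x hx y hy => hx y (h hy)

variable (hstar : ∀ x y : P, y ≤ star x ↔ ∀ z : P, z ≤ x → z ≤ y → z = ⊥)
include hstar

lemma perp_symm {x y : P} (h : y ≤ star x) : x ≤ star y := by
  rw [hstar] at h ⊢
  exact fun z hz hz' => h z hz' hz

lemma meet_star_bot {s z : P} (h1 : z ≤ s) (h2 : z ≤ star s) : z = ⊥ :=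
  (hstar s (star s)).mp le_rfl z h1 h2

lemma subset_biperp {S : Set P} : S ⊆ pperp star (pperp star S) :=
  fun y hy x hx => perp_symm hstar (hx y hy)

lemma triperp {S : Set P} :
    pperp star (pperp star (pperp star S)) = pperp star S :=
  le_antisymm (pperp_anti (subset_biperp hstar)) (subset_biperp hstar)

omit hstar in
lemma pperp_union {S T : Set P} :
    pperp star (S ∪ T) = pperp star S ∩ pperp star T := by
  ext x
  simp only [pperp, Set.mem_setOf_eq, Set.mem_union, Set.mem_inter_iff, or_imp, forall_and]

lemma pperp_Iic {s : P} : pperp star (Set.Iic s) = Set.Iic (star s) := by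
  ext x
  constructor
  · intro h
    exact perp_symm hstar (h s le_rfl)
  · intro hx y hy
    exact le_trans hy (perp_symm hstar hx)

lemma pperp_down_closed {S : Set P} {x w : P} (hwx : w ≤ x)
    (hx : x ∈ pperp star S) : w ∈ pperp star S := by
  intro y hy
  rw [hstar]
  exact fun z hzw hzy => (hstar x y).mp (hx y hy) z (le_trans hzw hwx) hzy

lemma bot_mem_pperp {S : Set P} : (⊥ : P) ∈ pperp star S := by
  intro y _
  rw [hstar]
  exact fun z hz _ => le_bot_iff.mp hz

lemma pperp_eq_Iic
    (hcomplete : ∀ B ⊆ Set.range star, ∃ c ∈ Set.range star, IsGLB B c)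
    (T : Set P) : ∃ s : P, pperp star T = Set.Iic s := by
  obtain ⟨c, -, hc⟩ := hcomplete (star '' T) (by rintro x ⟨y, -, rfl⟩; exact ⟨y, rfl⟩)
  refine ⟨c, ?_⟩
  have key : pperp star T = lowerBounds (star '' T) := by
    ext x
    constructor
    · rintro hx y ⟨t, ht, rfl⟩
      exact perp_symm hstar (hx t ht)
    · intro hx y hy
      exact perp_symm hstar (hx ⟨y, hy, rfl⟩)
  rw [key]
  ext x
  exact ⟨fun hx => hc.2 hx, fun hx y hy => le_trans hx (hc.1 hy)⟩

end Aux

theorem stmt_15 {P : Type*} [PartialOrder P] [BoundedOrder P] (star : P → P)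
    (hstar : ∀ x y : P, y ≤ star x ↔ ∀ z : P, z ≤ x → z ≤ y → z = ⊥)
    -- every subset of P* has a greatest lower bound in (P, ≤) lying in P*
    (hcomplete : ∀ B ⊆ Set.range star, ∃ c ∈ Set.range star, IsGLB B c)
    (A B C : Set P)
    (hA : pperp star (pperp star A) = A)
    (hB : pperp star (pperp star B) = B)
    (hC : pperp star (pperp star C) = C) :
    A ∩ pperp star (pperp star (B ∪ C)) =
      pperp star (pperp star ((A ∩ B) ∪ (A ∩ C))) ∧
    A ∩ pperp star A = {⊥} ∧
    pperp star (pperp star (A ∪ pperp star A)) = Set.univ := by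
  have part2 : A ∩ pperp star A = {⊥} := by
    ext x
    constructor
    · rintro ⟨hxA, hxp⟩
      exact (hstar x x).mp (hxp x hxA) x le_rfl le_rfl
    · rintro rfl
      exact ⟨hA ▸ bot_mem_pperp hstar, bot_mem_pperp hstar⟩
  have down : ∀ (S : Set P), pperp star (pperp star S) = S →
      ∀ {w x : P}, w ≤ x → x ∈ S → w ∈ S := by
    intro S hS w x hwx hx
    rw [← hS] at hx ⊢
    exact pperp_down_closed hstar hwx hx
  refine ⟨?_, part2, ?_⟩
  · -- distributivity
    -- representations as principal downsets
    obtain ⟨s, hs⟩ := pperp_eq_Iic hstar hcomplete (B ∪ C)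
    obtain ⟨g₁, hg₁⟩ := pperp_eq_Iic hstar hcomplete (pperp star A ∪ pperp star B)
    obtain ⟨g₂, hg₂⟩ := pperp_eq_Iic hstar hcomplete (pperp star A ∪ pperp star C)
    obtain ⟨u, hu⟩ := pperp_eq_Iic hstar hcomplete ((A ∩ B) ∪ (A ∩ C))
    have hAB : A ∩ B = Set.Iic g₁ := by
      rw [← hg₁, pperp_union, hA, hB]
    have hAC : A ∩ C = Set.Iic g₂ := by
      rw [← hg₂, pperp_union, hA, hC]
    apply le_antisymm
    · -- hard direction
      rintro x ⟨hxA, hxBC⟩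
      -- x ≤ star s
      have hxs : x ≤ star s := by
        have := hxBC
        rw [hs, pperp_Iic hstar] at this
        exact this
      -- goal : x ∈ pperp (pperp D) ; use pperp D = Iic u
      intro w hw
      rw [hu] at hw
      rw [hstar]
      intro z hzx hzu
      have hz_pD : z ∈ pperp star ((A ∩ B) ∪ (A ∩ C)) := by
        rw [hu]; exact le_trans hzu hw
      have hg₁z : z ≤ star g₁ :=
        perp_symm hstar (hz_pD g₁ (Or.inl (by rw [hAB]; exact Set.mem_Iic.mpr le_rfl)))
      have hg₂z : z ≤ star g₂ :=
        perp_symm hstar (hz_pD g₂ (Or.inr (by rw [hAC]; exact Set.mem_Iic.mpr le_rfl)))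
      -- show z ≤ s, i.e. z ∈ pperp (B ∪ C)
      have hzs : z ≤ s := by
        rw [← Set.mem_Iic, ← hs]
        intro y hy
        rw [hstar]
        intro v hvz hvy
        have hvA : v ∈ A := down A hA (le_trans hvz hzx) hxA
        rcases hy with hyB | hyC
        · have hvB : v ∈ B := down B hB hvy hyB
          have hvg₁ : v ≤ g₁ := by rw [← Set.mem_Iic, ← hAB]; exact ⟨hvA, hvB⟩
          exact meet_star_bot hstar hvg₁ (le_trans hvz hg₁z)
        · have hvC : v ∈ C := down C hC hvy hyC
          have hvg₂ : v ≤ g₂ := by rw [← Set.mem_Iic, ← hAC]; exact ⟨hvA, hvC⟩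
          exact meet_star_bot hstar hvg₂ (le_trans hvz hg₂z)
      exact meet_star_bot hstar hzs (le_trans hzx hxs)
    · -- easy direction : closure of (A∩B)∪(A∩C) is contained in the closed set LHS
      have hclosed : A ∩ pperp star (pperp star (B ∪ C)) =
          pperp star (pperp star A ∪ pperp star (B ∪ C)) := by
        rw [pperp_union (S := pperp star A) (T := pperp star (B ∪ C)), hA]
      have hsub : (A ∩ B) ∪ (A ∩ C) ⊆ A ∩ pperp star (pperp star (B ∪ C)) := by
        rintro x (⟨hxA, hxB⟩ | ⟨hxA, hxC⟩)
        · exact ⟨hxA, subset_biperp hstar (Or.inl hxB)⟩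
        · exact ⟨hxA, subset_biperp hstar (Or.inr hxC)⟩
      rw [hclosed] at hsub ⊢
      calc pperp star (pperp star ((A ∩ B) ∪ (A ∩ C)))
          ⊆ pperp star (pperp star (pperp star (pperp star A ∪ pperp star (B ∪ C)))) :=
            pperp_anti (pperp_anti hsub)
        _ = pperp star (pperp star A ∪ pperp star (B ∪ C)) := triperp hstar
  · -- A ∪ A⊥ generates everything
    ext x
    simp only [Set.mem_univ, iff_true]
    intro y hy
    rw [pperp_union] at hy
    have : y ∈ A ∩ pperp star A := ⟨hA ▸ hy.2, hy.1⟩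
    rw [part2] at this
    rw [Set.mem_singleton_iff] at this
    subst this
    rw [hstar]
    exact fun z _ hz => le_bot_iff.mp hz
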